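/- arXiv:2107.12084 — 2 statements merged into one kernel-verified Lean document; each statement's English description precedes it below -/
import Mathlib

section
/- Suppose Ω is convex and x̄ is a local ⪯ʳ_K-weakly minimal solution of the set optimization problem min_{x∈Ω} F(x) for r ∈ {l,u}. If r = l and F is ⪯ˡ_K-convex, then x̄ is a global ⪯ˡ_K-weakly minimal solution. If r = u, F is ⪯ᵘ_K-convex and H_F(x̄) := F(x̄) − K is convex, then x̄ is a global ⪯ᵘ_K-weakly minimal solution. -/
open Set Topology Metric Pointwise

/-- The Gerstewitz (Tammer) scalarizing functional `Ψ_e(y) = inf {t : y ∈ t•e - K}`. -/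
noncomputable def psiE {Y : Type*} [NormedAddCommGroup Y] [NormedSpace ℝ Y]
    (K : Set Y) (e : Y) (y : Y) : ℝ :=
  sInf {t : ℝ | t • e - y ∈ K}

/-- The lower inner function `g_l(x,z) = inf_{y ∈ F x} Ψ_e (y - z)` (with values in `EReal`). -/
noncomputable def glow {X Y : Type*} [NormedAddCommGroup X] [NormedSpace ℝ X]
    [NormedAddCommGroup Y] [NormedSpace ℝ Y]
    (K : Set Y) (e : Y) (F : X → Set Y) (x : X) (z : Y) : EReal :=
  ⨅ y ∈ F x, (psiE K e (y - z) : EReal)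

/-- The upper inner function `g_{u,x̄}(y) = inf_{ȳ ∈ F x̄} Ψ_e (y - ȳ)`. -/
noncomputable def gupp {X Y : Type*} [NormedAddCommGroup X] [NormedSpace ℝ X]
    [NormedAddCommGroup Y] [NormedSpace ℝ Y]
    (K : Set Y) (e : Y) (F : X → Set Y) (xbar : X) (y : Y) : EReal :=
  ⨅ yb ∈ F xbar, (psiE K e (y - yb) : EReal)

/-- The lower scalarizing functional `f_{l,x̄}(x) = sup_{ȳ ∈ F x̄} g_l(x, ȳ)`. -/
noncomputable def flow {X Y : Type*} [NormedAddCommGroup X] [NormedSpace ℝ X]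
    [NormedAddCommGroup Y] [NormedSpace ℝ Y]
    (K : Set Y) (e : Y) (F : X → Set Y) (xbar : X) (x : X) : EReal :=
  ⨆ yb ∈ F xbar, glow K e F x yb

/-- The upper scalarizing functional `f_{u,x̄}(x) = sup_{y ∈ F x} g_{u,x̄}(y)`. -/
noncomputable def fupp {X Y : Type*} [NormedAddCommGroup X] [NormedSpace ℝ X]
    [NormedAddCommGroup Y] [NormedSpace ℝ Y]
    (K : Set Y) (e : Y) (F : X → Set Y) (xbar : X) (x : X) : EReal :=
  ⨆ y ∈ F x, gupp K e F xbar y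

/-- Weakly minimal elements: `WMin(A,K) = {a ∈ A : (a - int K) ∩ A = ∅}`. -/
def wMinSet {Y : Type*} [NormedAddCommGroup Y] (A K : Set Y) : Set Y :=
  {a ∈ A | ∀ b ∈ A, a - b ∉ interior K}

/-- Weakly maximal elements: `WMax(A,K) = {a ∈ A : (a + int K) ∩ A = ∅}`. -/
def wMaxSet {Y : Type*} [NormedAddCommGroup Y] (A K : Set Y) : Set Y :=
  {a ∈ A | ∀ b ∈ A, b - a ∉ interior K}

/-- Minimal elements: `Min(A,K) = {a ∈ A : (a - K) ∩ A = {a}}`. -/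
def minSet {Y : Type*} [AddGroup Y] (A K : Set Y) : Set Y :=
  {a ∈ A | ∀ b ∈ A, a - b ∈ K → b = a}

/-!
Convexity of `F` propagates a strict improvement along segments: if `F x` is strictly better than
`F x̄`, then so is `F xₜ` for `xₜ = t • x + (1 - t) • x̄` and every `t ∈ (0,1)`, because a
`t`-fraction of the gap in `int K` survives and `K + int K ⊆ int K`. Since `xₜ → x̄` as `t → 0⁺`,
this contradicts local weak minimality. In the upper case the convex combination of an element of
`F x̄` with an improved one must be pushed back into `F x̄ - K`, which is where convexity of
`F x̄ - K` enters.
-/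

section Cone

variable {Y : Type*} [AddCommGroup Y] {K : Set Y}

theorem add_mem_interior_of_add_mem [TopologicalSpace Y] [ContinuousAdd Y]
    (hKadd : ∀ a ∈ K, ∀ b ∈ K, a + b ∈ K) {a b : Y} (ha : a ∈ K) (hb : b ∈ interior K) :
    a + b ∈ interior K :=
  interior_mono (by rintro _ ⟨a, ha, b, hb, rfl⟩; exact hKadd a ha b hb)
    (subset_interior_add_right (Set.add_mem_add ha hb))

variable [Module ℝ Y]

theorem add_mem_of_convex_of_smul_mem (hKcv : Convex ℝ K)
    (hKcone : ∀ t : ℝ, 0 ≤ t → ∀ y ∈ K, t • y ∈ K) {a b : Y} (ha : a ∈ K) (hb : b ∈ K) :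
    a + b ∈ K := by
  have hmid := hKcv ha hb (by norm_num : (0 : ℝ) ≤ 1 / 2) (by norm_num : (0 : ℝ) ≤ 1 / 2)
    (by norm_num)
  convert hKcone 2 zero_le_two _ hmid using 1
  module

variable [TopologicalSpace Y]

theorem smul_mem_interior_of_smul_mem [ContinuousConstSMul ℝ Y]
    (hKcone : ∀ t : ℝ, 0 ≤ t → ∀ y ∈ K, t • y ∈ K) {t : ℝ} (ht : 0 < t) {u : Y}
    (hu : u ∈ interior K) : t • u ∈ interior K := by
  have htu : t • u ∈ interior (t • K) := by
    rw [interior_smul₀ ht.ne']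
    exact Set.smul_mem_smul_set hu
  exact interior_mono (by rintro _ ⟨y, hy, rfl⟩; exact hKcone t ht.le y hy) htu

variable [ContinuousAdd Y] [ContinuousConstSMul ℝ Y]

theorem subset_add_interior_of_smul_add_smul_subset (hKadd : ∀ a ∈ K, ∀ b ∈ K, a + b ∈ K)
    (hKcone : ∀ t : ℝ, 0 ≤ t → ∀ y ∈ K, t • y ∈ K) {A B C : Set Y} {t : ℝ} (ht : 0 < t)
    (hA : A ⊆ B + interior K) (hC : t • B + (1 - t) • A ⊆ C + K) :
    A ⊆ C + interior K := by
  intro a ha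
  obtain ⟨b, hb, u, hu, rfl⟩ := hA ha
  obtain ⟨c, hc, k, hk, hck⟩ :=
    hC (Set.add_mem_add (Set.smul_mem_smul_set hb) (Set.smul_mem_smul_set ha))
  refine ⟨c, hc, k + t • u, add_mem_interior_of_add_mem hKadd hk
    (smul_mem_interior_of_smul_mem hKcone ht hu), ?_⟩
  linear_combination (norm := module) hck

theorem subset_sub_interior_of_subset_smul_add_smul_sub
    (hKadd : ∀ a ∈ K, ∀ b ∈ K, a + b ∈ K) (hKcone : ∀ t : ℝ, 0 ≤ t → ∀ y ∈ K, t • y ∈ K)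
    (hK0 : (0 : Y) ∈ K) {A B C : Set Y} {t : ℝ} (ht₀ : 0 < t) (ht₁ : t ≤ 1)
    (hAK : Convex ℝ (A - K)) (hB : B ⊆ A - interior K) (hC : C ⊆ t • B + (1 - t) • A - K) :
    C ⊆ A - interior K := by
  have hA : A ⊆ A - K := fun a ha => ⟨a, ha, 0, hK0, sub_zero a⟩
  intro c hc
  obtain ⟨_, ⟨_, ⟨b, hb, rfl⟩, _, ⟨a, ha, rfl⟩, rfl⟩, k, hk, rfl⟩ := hC hc
  obtain ⟨a', ha', u, hu, rfl⟩ := hB hb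
  obtain ⟨p, hp, q, hq, hpq⟩ :=
    hAK (hA ha') (hA ha) ht₀.le (sub_nonneg.mpr ht₁) (add_sub_cancel t 1)
  have hqu : q + t • u ∈ interior K :=
    add_mem_interior_of_add_mem hKadd hq (smul_mem_interior_of_smul_mem hKcone ht₀ hu)
  refine ⟨p, hp, k + (q + t • u), add_mem_interior_of_add_mem hKadd hk hqu, ?_⟩
  linear_combination (norm := module) hpq

end Cone

theorem Convex.forall_not_of_eventually_not_of_segment {X : Type*} [AddCommGroup X]
    [Module ℝ X] [TopologicalSpace X] [ContinuousAdd X] [ContinuousSMul ℝ X] {Ω : Set X}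
    {xbar : X} {P : X → Prop} (hΩ : Convex ℝ Ω) (hxbar : xbar ∈ Ω)
    (hP : ∀ x ∈ Ω, P x → ∀ t ∈ Set.Ioo (0 : ℝ) 1, P (t • x + (1 - t) • xbar))
    (hloc : ∃ U ∈ 𝓝 xbar, ∀ x ∈ Ω ∩ U, x ≠ xbar → ¬ P x) :
    ∀ x ∈ Ω, x ≠ xbar → ¬ P x := by
  intro x hx hne hPx
  obtain ⟨U, hU, hUloc⟩ := hloc
  have hseg : Filter.Tendsto (fun t : ℝ => t • x + (1 - t) • xbar) (𝓝[>] 0) (𝓝 xbar) := by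
    have hcont : Continuous fun t : ℝ => t • x + (1 - t) • xbar := by fun_prop
    simpa using (hcont.tendsto 0).mono_left nhdsWithin_le_nhds
  obtain ⟨t, htU, ht⟩ := ((hseg.eventually hU).and (Ioo_mem_nhdsGT one_pos)).exists
  have hxt : t • x + (1 - t) • xbar ≠ xbar := by
    rw [Ne, ← sub_eq_zero, show t • x + (1 - t) • xbar - xbar = t • (x - xbar) by module]
    exact smul_ne_zero ht.1.ne' (sub_ne_zero.mpr hne)
  have hxtΩ : t • x + (1 - t) • xbar ∈ Ω :=
    hΩ hx hxbar ht.1.le (sub_nonneg.mpr ht.2.le) (add_sub_cancel t 1)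
  exact hUloc _ ⟨hxtΩ, htU⟩ hxt (hP x hx hPx t ht)

theorem stmt17_general
    {X Y : Type*} [NormedAddCommGroup X] [NormedSpace ℝ X]
    [NormedAddCommGroup Y] [NormedSpace ℝ Y]
    (K : Set Y) (e : Y) (F : X → Set Y) (Ω : Set X) (xbar : X)
    (hKcv : Convex ℝ K)
    (hKcone : ∀ t : ℝ, 0 ≤ t → ∀ y ∈ K, t • y ∈ K)
    (he : e ∈ interior K)
    (hΩdom : Ω ⊆ interior {x | (F x).Nonempty})
    (hxΩ : xbar ∈ Ω)
    (hΩconv : Convex ℝ Ω) :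
    ((∀ x₁ x₂ : X, (F x₁).Nonempty → (F x₂).Nonempty → ∀ t : ℝ, t ∈ Set.Ioo (0:ℝ) 1 →
        t • F x₁ + (1 - t) • F x₂ ⊆ F (t • x₁ + (1 - t) • x₂) + K) →
      (∃ U ∈ 𝓝 xbar, ∀ x ∈ Ω ∩ U, x ≠ xbar → ¬ (F xbar ⊆ F x + interior K)) →
      ∀ x ∈ Ω, x ≠ xbar → ¬ (F xbar ⊆ F x + interior K)) ∧
    ((∀ x₁ x₂ : X, (F x₁).Nonempty → (F x₂).Nonempty → ∀ t : ℝ, t ∈ Set.Ioo (0:ℝ) 1 →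
        F (t • x₁ + (1 - t) • x₂) ⊆ (t • F x₁ + (1 - t) • F x₂) - K) →
      Convex ℝ (F xbar - K) →
      (∃ U ∈ 𝓝 xbar, ∀ x ∈ Ω ∩ U, x ≠ xbar → ¬ (F x ⊆ F xbar - interior K)) →
      ∀ x ∈ Ω, x ≠ xbar → ¬ (F x ⊆ F xbar - interior K)) := by
  have hdom : ∀ x ∈ Ω, (F x).Nonempty := fun _ hx =>
    interior_subset (s := {x | (F x).Nonempty}) (hΩdom hx)
  have hKadd : ∀ a ∈ K, ∀ b ∈ K, a + b ∈ K := fun _ ha _ hb =>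
    add_mem_of_convex_of_smul_mem hKcv hKcone ha hb
  have hK0 : (0 : Y) ∈ K := by simpa using hKcone 0 le_rfl e (interior_subset he)
  refine ⟨fun hconv => hΩconv.forall_not_of_eventually_not_of_segment
      (P := fun x => F xbar ⊆ F x + interior K) hxΩ fun x hx hsub t ht => ?_,
    fun hconv hH => hΩconv.forall_not_of_eventually_not_of_segment
      (P := fun x => F x ⊆ F xbar - interior K) hxΩ fun x hx hsub t ht => ?_⟩
  · exact subset_add_interior_of_smul_add_smul_subset hKadd hKcone ht.1 hsub
      (hconv x xbar (hdom x hx) (hdom xbar hxΩ) t ht)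
  · exact subset_sub_interior_of_subset_smul_add_smul_sub hKadd hKcone hK0 ht.1 ht.2.le hH hsub
      (hconv x xbar (hdom x hx) (hdom xbar hxΩ) t ht)

/-- under convexity of Ω and of F (in the corresponding set-relation sense),
local ⪯ʳ_K-weakly minimal solutions of the set optimization problem are global ones.
Here F(x) ≺ˡ_K F(x̄) means F(x̄) ⊆ F(x) + int K, and F(x) ≺ᵘ_K F(x̄) means
F(x) ⊆ F(x̄) - int K. -/
theorem stmt17
    {X Y : Type*} [NormedAddCommGroup X] [NormedSpace ℝ X] [CompleteSpace X]
    [NormedAddCommGroup Y] [NormedSpace ℝ Y] [CompleteSpace Y]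
    (K : Set Y) (e : Y) (F : X → Set Y) (Ω : Set X) (xbar : X)
    (hKcl : IsClosed K) (hKcv : Convex ℝ K)
    (hKcone : ∀ t : ℝ, 0 ≤ t → ∀ y ∈ K, t • y ∈ K)
    (hKpt : K ∩ (-K) = {0})
    (he : e ∈ interior K)
    (hΩne : Ω.Nonempty) (hΩcl : IsClosed Ω)
    (hΩdom : Ω ⊆ interior {x | (F x).Nonempty})
    (hxΩ : xbar ∈ Ω)
    (hΩconv : Convex ℝ Ω) :
    ((∀ x₁ x₂ : X, (F x₁).Nonempty → (F x₂).Nonempty → ∀ t : ℝ, t ∈ Set.Ioo (0:ℝ) 1 →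
        t • F x₁ + (1 - t) • F x₂ ⊆ F (t • x₁ + (1 - t) • x₂) + K) →
      (∃ U ∈ 𝓝 xbar, ∀ x ∈ Ω ∩ U, x ≠ xbar → ¬ (F xbar ⊆ F x + interior K)) →
      ∀ x ∈ Ω, x ≠ xbar → ¬ (F xbar ⊆ F x + interior K)) ∧
    ((∀ x₁ x₂ : X, (F x₁).Nonempty → (F x₂).Nonempty → ∀ t : ℝ, t ∈ Set.Ioo (0:ℝ) 1 →
        F (t • x₁ + (1 - t) • x₂) ⊆ (t • F x₁ + (1 - t) • F x₂) - K) →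
      Convex ℝ (F xbar - K) →
      (∃ U ∈ 𝓝 xbar, ∀ x ∈ Ω ∩ U, x ≠ xbar → ¬ (F x ⊆ F xbar - interior K)) →
      ∀ x ∈ Ω, x ≠ xbar → ¬ (F x ⊆ F xbar - interior K)) :=
  stmt17_general K e F Ω xbar hKcv hKcone he hΩdom hxΩ hΩconv
end

section
/- Let r ∈ {l,u}. Suppose x̄ is a local strict solution of the scalar problem min_{x∈Ω} f_{r,x̄}(x), i.e., there is a neighborhood U of x̄ with f_{r,x̄}(x̄) < f_{r,x̄}(x) for all x ∈ (Ω ∩ U) \ {x̄}, and suppose either r = l and WMin(F(x̄),K) ≠ ∅, or r = u and WMax(F(x̄),K) ≠ ∅. Then x̄ is a local ⪯ʳ_K-strictly minimal solution of the set optimization problem min_{x∈Ω} F(x), i.e., there is a neighborhood U' of x̄ with no x ∈ (Ω ∩ U') \ {x̄} satisfying F(x) ⪯ʳ_K F(x̄). -/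
open Set Topology Metric Pointwise

/-!
If `F x̄ ⊆ F x + K`, every `ȳ ∈ F x̄` is `y + k` with `y ∈ F x`, `k ∈ K`, and `Ψ_e(y - ȳ) = Ψ_e(-k) ≤ 0`,
so `f_{l,x̄}(x) ≤ 0`. A weakly minimal `ȳ₀ ∈ F x̄` has `-(y - ȳ₀) ∉ int K` for all `y ∈ F x̄`, and on such
vectors `Ψ_e ≥ 0`; hence `f_{l,x̄}(x̄) ≥ 0`, contradicting strict local minimality at any `x ≠ x̄`.
The upper case is symmetric, with a weakly maximal element of `F x̄`.
-/

section Gerstewitz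

variable {Y : Type*} [NormedAddCommGroup Y] [NormedSpace ℝ Y] {K : Set Y}

lemma smul_mem_interior_of_cone (hKcone : ∀ t : ℝ, 0 ≤ t → ∀ y ∈ K, t • y ∈ K)
    {c : ℝ} (hc : 0 < c) {u : Y} (hu : u ∈ interior K) : c • u ∈ interior K := by
  have hcu : c • u ∈ interior (c • K) := by
    rw [interior_smul₀ hc.ne']
    exact smul_mem_smul_set hu
  refine interior_mono ?_ hcu
  rintro _ ⟨y, hy, rfl⟩
  exact hKcone c hc.le y hy

lemma add_mem_interior_of_cone (hKcv : Convex ℝ K)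
    (hKcone : ∀ t : ℝ, 0 ≤ t → ∀ y ∈ K, t • y ∈ K)
    {u k : Y} (hu : u ∈ interior K) (hk : k ∈ K) : u + k ∈ interior K := by
  have hmid : (1 / 2 : ℝ) • u + (1 / 2 : ℝ) • k ∈ interior K :=
    hKcv.combo_interior_self_mem_interior hu hk (by norm_num) (by norm_num) (by norm_num)
  have h2 := smul_mem_interior_of_cone hKcone (c := 2) (by norm_num) hmid
  rwa [smul_add, smul_smul, smul_smul, show (2 : ℝ) * (1 / 2) = 1 by norm_num, one_smul,
    one_smul] at h2

/-- If the defining set is unbounded below, `psiE` is the junk value `0`, which is still `≤ 0`. -/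
lemma psiE_nonpos_of_neg_mem (K : Set Y) (e : Y) {z : Y} (hz : -z ∈ K) : psiE K e z ≤ 0 := by
  have h0 : (0 : ℝ) ∈ {t : ℝ | t • e - z ∈ K} := by
    rwa [mem_ofPred_eq, zero_smul, zero_sub]
  by_cases hb : BddBelow {t : ℝ | t • e - z ∈ K}
  · exact csInf_le hb h0
  · simp [psiE, Real.sInf_of_not_bddBelow hb]

lemma psiE_nonneg_of_neg_notMem_interior {e : Y} (hKcv : Convex ℝ K)
    (hKcone : ∀ t : ℝ, 0 ≤ t → ∀ y ∈ K, t • y ∈ K) (he : e ∈ interior K)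
    {z : Y} (hz : -z ∉ interior K) : 0 ≤ psiE K e z := by
  refine Real.sInf_nonneg fun t ht => ?_
  by_contra! htneg
  -- for `t < 0`, `-z = (-t) • e + (t • e - z)` lies in `int K + K ⊆ int K`
  have hint := add_mem_interior_of_cone hKcv hKcone
    (smul_mem_interior_of_cone hKcone (neg_pos.mpr htneg) he) (ht : t • e - z ∈ K)
  rw [neg_smul, ← sub_eq_neg_add, sub_sub_cancel_left] at hint
  exact hz hint

end Gerstewitz

section Scalarization

variable {X Y : Type*} [NormedAddCommGroup X] [NormedSpace ℝ X]
  [NormedAddCommGroup Y] [NormedSpace ℝ Y] {K : Set Y} {e : Y} {F : X → Set Y} {xbar x : X}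

lemma flow_nonpos_of_subset_add (hsub : F xbar ⊆ F x + K) : flow K e F xbar x ≤ 0 := by
  refine iSup₂_le fun yb hyb => ?_
  obtain ⟨y, hy, k, hk, rfl⟩ := hsub hyb
  refine iInf₂_le_of_le y hy (EReal.coe_nonpos.mpr (psiE_nonpos_of_neg_mem K e ?_))
  rwa [sub_add_cancel_left, neg_neg]

lemma fupp_nonpos_of_subset_sub (hsub : F x ⊆ F xbar - K) : fupp K e F xbar x ≤ 0 := by
  refine iSup₂_le fun y hy => ?_
  obtain ⟨yb, hyb, k, hk, rfl⟩ := hsub hy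
  refine iInf₂_le_of_le yb hyb (EReal.coe_nonpos.mpr (psiE_nonpos_of_neg_mem K e ?_))
  rwa [sub_sub_cancel_left, neg_neg]

variable (hKcv : Convex ℝ K) (hKcone : ∀ t : ℝ, 0 ≤ t → ∀ y ∈ K, t • y ∈ K)
  (he : e ∈ interior K)
include hKcv hKcone he

lemma flow_self_nonneg_of_mem_wMinSet {y₀ : Y} (hy₀ : y₀ ∈ wMinSet (F xbar) K) :
    0 ≤ flow K e F xbar xbar := by
  refine le_trans ?_ (le_iSup₂ (f := fun yb _ => glow K e F xbar yb) y₀ hy₀.1)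
  refine le_iInf₂ fun y hy => EReal.coe_nonneg.mpr ?_
  refine psiE_nonneg_of_neg_notMem_interior hKcv hKcone he ?_
  rw [neg_sub]
  exact hy₀.2 y hy

lemma fupp_self_nonneg_of_mem_wMaxSet {y₀ : Y} (hy₀ : y₀ ∈ wMaxSet (F xbar) K) :
    0 ≤ fupp K e F xbar xbar := by
  refine le_trans ?_ (le_iSup₂ (f := fun y _ => gupp K e F xbar y) y₀ hy₀.1)
  refine le_iInf₂ fun yb hyb => EReal.coe_nonneg.mpr ?_
  refine psiE_nonneg_of_neg_notMem_interior hKcv hKcone he ?_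
  rw [neg_sub]
  exact hy₀.2 yb hyb

end Scalarization

theorem stmt19_general
    {X Y : Type*} [NormedAddCommGroup X] [NormedSpace ℝ X]
    [NormedAddCommGroup Y] [NormedSpace ℝ Y]
    (K : Set Y) (e : Y) (F : X → Set Y) (Ω : Set X) (xbar : X)
    (hKcv : Convex ℝ K)
    (hKcone : ∀ t : ℝ, 0 ≤ t → ∀ y ∈ K, t • y ∈ K)
    (he : e ∈ interior K) :
    ((wMinSet (F xbar) K).Nonempty →
      (∃ U ∈ 𝓝 xbar, ∀ x ∈ Ω ∩ U, x ≠ xbar → flow K e F xbar xbar < flow K e F xbar x) →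
      ∃ U' ∈ 𝓝 xbar, ∀ x ∈ Ω ∩ U', x ≠ xbar → ¬ (F xbar ⊆ F x + K)) ∧
    ((wMaxSet (F xbar) K).Nonempty →
      (∃ U ∈ 𝓝 xbar, ∀ x ∈ Ω ∩ U, x ≠ xbar → fupp K e F xbar xbar < fupp K e F xbar x) →
      ∃ U' ∈ 𝓝 xbar, ∀ x ∈ Ω ∩ U', x ≠ xbar → ¬ (F x ⊆ F xbar - K)) := by
  constructor
  · rintro ⟨y₀, hy₀⟩ ⟨U, hU, hstrict⟩
    refine ⟨U, hU, fun x hx hne hsub => (hstrict x hx hne).not_ge ?_⟩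
    exact (flow_nonpos_of_subset_add hsub).trans
      (flow_self_nonneg_of_mem_wMinSet hKcv hKcone he hy₀)
  · rintro ⟨y₀, hy₀⟩ ⟨U, hU, hstrict⟩
    refine ⟨U, hU, fun x hx hne hsub => (hstrict x hx hne).not_ge ?_⟩
    exact (fupp_nonpos_of_subset_sub hsub).trans
      (fupp_self_nonneg_of_mem_wMaxSet hKcv hKcone he hy₀)

/-- if x̄ is a local strict solution of the scalar problem min_{x ∈ Ω} f_{r,x̄}
and WMin(F(x̄),K) ≠ ∅ (for r = l), resp. WMax(F(x̄),K) ≠ ∅ (for r = u), then x̄ is a local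
⪯ʳ_K-strictly minimal solution of the set optimization problem. Here F(x) ⪯ˡ_K F(x̄) means
F(x̄) ⊆ F(x) + K and F(x) ⪯ᵘ_K F(x̄) means F(x) ⊆ F(x̄) - K. -/
theorem stmt19
    {X Y : Type*} [NormedAddCommGroup X] [NormedSpace ℝ X] [CompleteSpace X]
    [NormedAddCommGroup Y] [NormedSpace ℝ Y] [CompleteSpace Y]
    (K : Set Y) (e : Y) (F : X → Set Y) (Ω : Set X) (xbar : X)
    (hKcl : IsClosed K) (hKcv : Convex ℝ K)
    (hKcone : ∀ t : ℝ, 0 ≤ t → ∀ y ∈ K, t • y ∈ K)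
    (hKpt : K ∩ (-K) = {0})
    (he : e ∈ interior K)
    (hΩne : Ω.Nonempty) (hΩcl : IsClosed Ω)
    (hΩdom : Ω ⊆ interior {x | (F x).Nonempty})
    (hxΩ : xbar ∈ Ω) :
    ((wMinSet (F xbar) K).Nonempty →
      (∃ U ∈ 𝓝 xbar, ∀ x ∈ Ω ∩ U, x ≠ xbar → flow K e F xbar xbar < flow K e F xbar x) →
      ∃ U' ∈ 𝓝 xbar, ∀ x ∈ Ω ∩ U', x ≠ xbar → ¬ (F xbar ⊆ F x + K)) ∧
    ((wMaxSet (F xbar) K).Nonempty →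
      (∃ U ∈ 𝓝 xbar, ∀ x ∈ Ω ∩ U, x ≠ xbar → fupp K e F xbar xbar < fupp K e F xbar x) →
      ∃ U' ∈ 𝓝 xbar, ∀ x ∈ Ω ∩ U', x ≠ xbar → ¬ (F x ⊆ F xbar - K)) :=
  stmt19_general K e F Ω xbar hKcv hKcone he
end
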